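/- In the weighted polynomial ring M = ℂ[Q,R] with deg Q = 4, deg R = 6, equipped with the derivation D determined by D(Q) = -⅓ R (after normalization D(Q) = c₁ R, D(R) = c₂ Q² with the Ramanujan relations), if I ⊆ M is a nonzero graded ideal stable under D such that the quotient M/I has no nonzero element annihilated by Δ = (Q³ - R²)/1728, then I = M. -/

import Mathlib

/-! For a weighted-homogeneous `h` of weight `n`, Euler's identity
`n h = 4 Q ∂_Q h + 6 R ∂_R h` and `D h = -(1/3) R ∂_Q h - (1/2) Q² ∂_R h` form a linear system in
`∂_Q h, ∂_R h` whose determinant is a multiple of `Q³ - R²`; hence `Δ ∂h` lies in the ideal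
generated by `h` and `D h`. A graded `D`-stable ideal from which `Δ` can be cancelled is therefore
stable under both partial derivatives, and a nonzero ideal of a polynomial ring in characteristic
zero with that property contains a nonzero constant: differentiate an element of minimal
total degree. -/

open MvPolynomial

noncomputable section

/-- The ring of modular forms, modeled as a weighted polynomial ring `ℂ[Q,R]`,
`Q` of weight 4, `R` of weight 6. -/
abbrev MM := MvPolynomial (Fin 2) ℂ

def Qg : MM := X 0
def Rg : MM := X 1

/-- The weights: `deg Q = 4`, `deg R = 6`. -/
def wt : Fin 2 → ℕ := ![4, 6]

/-- The Serre derivation, determined by `D(Q) = -(1/3) R` and `D(R) = -(1/2) Q²`. -/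
def Dser : Derivation ℂ MM MM :=
  mkDerivation ℂ ![(-(1/3 : ℂ)) • Rg, (-(1/2 : ℂ)) • Qg ^ 2]

/-- `Δ = (Q³ - R²)/1728`. -/
def Δg : MM := (1/1728 : ℂ) • (Qg ^ 3 - Rg ^ 2)

/-- An ideal is graded (w.r.t. the weighted grading) if it is spanned by its
weighted-homogeneous elements. -/
def IsGradedIdeal (I : Ideal MM) : Prop :=
  I = Ideal.span {x : MM | x ∈ I ∧ ∃ n : ℕ, x ∈ weightedHomogeneousSubmodule ℂ wt n}

namespace MvPolynomial

variable {σ R : Type*} [CommSemiring R]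

theorem totalDegree_pderiv_le (i : σ) (f : MvPolynomial σ R) :
    (pderiv i f).totalDegree ≤ f.totalDegree - 1 := by
  refine Finset.sup_le fun m hm => ?_
  have hf : m + Finsupp.single i 1 ∈ f.support := by
    rw [mem_support_iff, coeff_pderiv] at hm
    exact mem_support_iff.2 (left_ne_zero_of_mul hm)
  have := le_totalDegree hf
  rw [Finsupp.sum_add_index' (fun _ => rfl) (fun _ _ _ => rfl),
    Finsupp.sum_single_index rfl] at this
  omega

theorem eq_C_of_forall_pderiv_eq_zero [NoZeroDivisors R] [CharZero R]
    {f : MvPolynomial σ R} (h : ∀ i, pderiv i f = 0) : f = C (coeff 0 f) := by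
  classical
  ext m
  rw [coeff_C]
  split_ifs with hm
  · rw [hm]
  obtain ⟨i, hi⟩ : ∃ i, m i ≠ 0 := by
    by_contra! hc
    exact hm (Finsupp.ext hc).symm
  have hcoeff := coeff_pderiv (i := i) f (m - Finsupp.single i 1)
  rw [h i, coeff_zero,
    tsub_add_cancel_of_le (Finsupp.single_le_iff.2 (Nat.one_le_iff_ne_zero.2 hi))] at hcoeff
  exact (mul_eq_zero.1 hcoeff.symm).resolve_right (Nat.cast_add_one_ne_zero _)

theorem exists_pderiv_ne_zero [NoZeroDivisors R] [CharZero R]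
    {f : MvPolynomial σ R} (hf : f.totalDegree ≠ 0) : ∃ i, pderiv i f ≠ 0 := by
  by_contra! h
  exact hf (totalDegree_eq_zero_iff_eq_C.2 (eq_C_of_forall_pderiv_eq_zero h))

theorem derivation_eq_sum_pderiv [Fintype σ]
    (D : Derivation R (MvPolynomial σ R) (MvPolynomial σ R)) (f : MvPolynomial σ R) :
    D f = ∑ i, D (X i) * pderiv i f := by
  classical
  have hsum (g : MvPolynomial σ R) :
      (∑ i, D (X i) • pderiv i : Derivation R _ _) g = ∑ i, D (X i) * pderiv i g := by
    rw [← Derivation.coeFnAddMonoidHom_apply, map_sum, Finset.sum_apply]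
    rfl
  rw [← hsum]
  congr 1
  refine derivation_ext fun j => ?_
  rw [hsum]
  simp [pderiv_X, Pi.single_apply]

end MvPolynomial

theorem Ideal.eq_top_of_forall_pderiv_mem {σ K : Type*} [Field K] [CharZero K]
    {I : Ideal (MvPolynomial σ K)} (hI : I ≠ ⊥) (hpderiv : ∀ f ∈ I, ∀ i, pderiv i f ∈ I) :
    I = ⊤ := by
  obtain ⟨f, hfI, hf0⟩ := Submodule.exists_mem_ne_zero_of_ne_bot hI
  induction hd : f.totalDegree using Nat.strong_induction_on generalizing f with
  | _ d ih =>
    by_cases hd0 : d = 0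
    · rw [hd0, totalDegree_eq_zero_iff_eq_C] at hd
      have hc : coeff 0 f ≠ 0 := fun h0 => hf0 (by rw [hd, h0, map_zero])
      exact I.eq_top_of_isUnit_mem hfI (hd ▸ (isUnit_iff_ne_zero.2 hc).map C)
    · obtain ⟨i, hi⟩ := exists_pderiv_ne_zero (hd ▸ hd0)
      exact ih _ (by have := totalDegree_pderiv_le i f; omega) (pderiv i f)
        (hpderiv f hfI i) hi rfl

theorem Derivation.apply_mem_span {R A : Type*} [CommSemiring R] [CommSemiring A] [Algebra R A]
    (d : Derivation R A A) {S : Set A} (hS : ∀ s ∈ S, d s ∈ Ideal.span S) {x : A}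
    (hx : x ∈ Ideal.span S) : d x ∈ Ideal.span S := by
  induction hx using Submodule.span_induction with
  | mem s hs => exact hS s hs
  | zero => simp
  | add x y _ _ hx hy => rw [map_add]; exact add_mem hx hy
  | smul a x hxS hx =>
    rw [smul_eq_mul, Derivation.leibniz]
    exact add_mem (Ideal.mul_mem_left _ _ hx) (Ideal.mul_mem_right _ _ hxS)

theorem six_mul_Dser (f : MM) :
    6 * Dser f = -2 * (Rg * pderiv 0 f) - 3 * (Qg ^ 2 * pderiv 1 f) := by
  rw [derivation_eq_sum_pderiv, Fin.sum_univ_two]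
  simp only [Dser, mkDerivation_X, Matrix.cons_val_zero, Matrix.cons_val_one]
  have hR : (6 : MM) * ((-(1/3 : ℂ)) • Rg) = -2 * Rg := by
    rw [smul_eq_C_mul, ← mul_assoc, ← map_ofNat C, ← map_mul,
      show (6 : ℂ) * -(1/3) = -2 by norm_num, map_neg, map_ofNat]
  have hQ : (6 : MM) * ((-(1/2 : ℂ)) • Qg ^ 2) = -3 * Qg ^ 2 := by
    rw [smul_eq_C_mul, ← mul_assoc, ← map_ofNat C, ← map_mul,
      show (6 : ℂ) * -(1/2) = -3 by norm_num, map_neg, map_ofNat]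
  linear_combination pderiv 0 f * hR + pderiv 1 f * hQ

theorem natCast_mul_eq_of_isWeightedHomogeneous {n : ℕ} {h : MM}
    (hh : IsWeightedHomogeneous wt h n) :
    (n : MM) * h = 4 * (Qg * pderiv 0 h) + 6 * (Rg * pderiv 1 h) := by
  rw [← nsmul_eq_mul, ← hh.sum_weight_X_mul_pderiv, Fin.sum_univ_two]
  simp [wt, Qg, Rg, nsmul_eq_mul]

theorem Δg_mul_pderiv_mem_span_pair {n : ℕ} {h : MM} (hh : IsWeightedHomogeneous wt h n)
    (i : Fin 2) : Δg * pderiv i h ∈ Ideal.span {h, Dser h} := by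
  have hΔ : (1728 : MM) * Δg = Qg ^ 3 - Rg ^ 2 := by
    rw [Δg, smul_eq_C_mul, ← mul_assoc, ← map_ofNat C, ← map_mul,
      show (1728 : ℂ) * (1/1728) = 1 by norm_num, map_one, one_mul]
  -- `20736 = 12 * 1728` clears the denominators of Cramer's rule for the system `hE`, `hD`.
  have hunit : IsUnit (20736 : MM) := by
    have := (isUnit_iff_ne_zero.2 (by norm_num : (20736 : ℂ) ≠ 0)).map (C : ℂ →+* MM)
    rwa [map_ofNat] at this
  have hE := natCast_mul_eq_of_isWeightedHomogeneous hh
  have hD := six_mul_Dser h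
  rw [← Ideal.unit_mul_mem_iff_mem _ hunit, Ideal.mem_span_pair]
  fin_cases i <;> simp only [Fin.zero_eta, Fin.mk_one]
  · exact ⟨3 * n * Qg ^ 2, 36 * Rg, by
      linear_combination 3 * Qg ^ 2 * hE + 6 * Rg * hD - 12 * pderiv 0 h * hΔ⟩
  · exact ⟨-(2 * n * Rg), -(24 * Qg), by
      linear_combination -2 * Rg * hE - 4 * Qg * hD - 12 * pderiv 1 h * hΔ⟩

theorem pderiv_mem_of_isGradedIdeal {I : Ideal MM} (hgr : IsGradedIdeal I)
    (hD : ∀ f ∈ I, Dser f ∈ I) (hann : ∀ x : MM, Δg * x ∈ I → x ∈ I) {f : MM} (hf : f ∈ I)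
    (i : Fin 2) : pderiv i f ∈ I := by
  rw [hgr] at hf ⊢
  refine (pderiv i).apply_mem_span ?_ hf
  rintro s ⟨hsI, n, hs⟩
  rw [← hgr]
  refine hann _ (Ideal.span_le.2 ?_ (Δg_mul_pderiv_mem_span_pair hs i))
  exact Set.insert_subset_iff.2 ⟨hsI, Set.singleton_subset_iff.2 (hD s hsI)⟩

/-- If `I` is a nonzero graded `d`-ideal of `M = ℂ[Q,R]` such that `M/I` has no nonzero
element annihilated by `Δ`, then `I = M`. -/
theorem graded_d_ideal_eq_top (I : Ideal MM) (hne : I ≠ ⊥) (hgr : IsGradedIdeal I)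
    (hD : ∀ f ∈ I, Dser f ∈ I)
    (hann : ∀ x : MM, Δg * x ∈ I → x ∈ I) :
    I = ⊤ :=
  Ideal.eq_top_of_forall_pderiv_mem hne fun _ hf i => pderiv_mem_of_isGradedIdeal hgr hD hann hf i

end
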